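/- arXiv:1610.05268 — 2 statements merged into one kernel-verified Lean document; each statement's English description precedes it below -/
import Mathlib

section
/- Let E be a topological graph with no singular vertices. If E is topologically free, then Iso(Γ(E^∞,σ))° is closed in Γ(E^∞,σ). -/
/-- A topological graph: vertex space `V`, edge space `E`, continuous range map `r`
and locally homeomorphic source map `s`. -/
structure TopGraph (V E : Type) [TopologicalSpace V] [TopologicalSpace E] where
  r : E → V
  s : E → V
  r_cont : Continuous r
  s_locHomeo : IsLocalHomeomorph s

namespace TopGraph

variable {V E : Type} [TopologicalSpace V] [TopologicalSpace E] (G : TopGraph V E)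

/-- The predicate that `μ : Fin n → E` is a (finite) path. -/
def IsPathFn {n : ℕ} (μ : Fin n → E) : Prop :=
  ∀ (i : ℕ) (h : i + 1 < n), G.s (μ ⟨i, Nat.lt_of_succ_lt h⟩) = G.r (μ ⟨i + 1, h⟩)

/-- The space `E^n` of paths of length `n`, with the subspace topology of the product. -/
def Path (n : ℕ) : Type := {μ : Fin n → E // G.IsPathFn μ}

instance (n : ℕ) : TopologicalSpace (G.Path n) :=
  inferInstanceAs (TopologicalSpace {μ : Fin n → E // G.IsPathFn μ})

/-- `r^n(μ) = r(μ₁)`. -/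
def pathRange {n : ℕ} (hn : 0 < n) (μ : G.Path n) : V := G.r (μ.1 ⟨0, hn⟩)

/-- `s^n(μ) = s(μₙ)`. -/
def pathSource {n : ℕ} (hn : 0 < n) (μ : G.Path n) : V :=
  G.s (μ.1 ⟨n - 1, Nat.sub_lt hn Nat.one_pos⟩)

/-- A cycle is a path whose range equals its source; its base point is its range. -/
def IsCycle {n : ℕ} (hn : 0 < n) (μ : G.Path n) : Prop :=
  G.pathRange hn μ = G.pathSource hn μ

/-- A path `μ ∈ E^n` has an entrance if some edge `e ≠ μᵢ` has `r(e) = r(μᵢ)`. -/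
def HasEntrance {n : ℕ} (μ : G.Path n) : Prop :=
  ∃ (i : Fin n) (e : E), G.r e = G.r (μ.1 i) ∧ e ≠ μ.1 i

theorem block_lt {n k : ℕ} (j : Fin k) (i : Fin n) : (j : ℕ) * n + (i : ℕ) < k * n := by
  have hi := i.2
  have hj := j.2
  calc (j : ℕ) * n + (i : ℕ) < ((j : ℕ) + 1) * n := by rw [Nat.add_mul, Nat.one_mul]; omega
    _ ≤ k * n := Nat.mul_le_mul (Nat.succ_le_of_lt hj) le_rfl

/-- The `j`-th block of length `n` of a path of length `k * n`. -/
def block {n k : ℕ} (α : G.Path (k * n)) (j : Fin k) : G.Path n :=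
  ⟨fun i => α.1 ⟨(j : ℕ) * n + (i : ℕ), block_lt j i⟩,
    fun i h => α.2 ((j : ℕ) * n + i) (block_lt j ⟨i + 1, h⟩)⟩

/-- `α ∈ kN` : every block of `α` lies in `N`. -/
def BlocksIn {n k : ℕ} (N : Set (G.Path n)) (α : G.Path (k * n)) : Prop :=
  ∀ j : Fin k, G.block α j ∈ N

/-- The set `B^n` of cycles of length `n` admitting `k ≥ 1` and an open neighbourhood `N`
satisfying conditions (1) and (2) of Notation 3.3. -/
def B (n : ℕ) (hn : 0 < n) : Set (G.Path n) :=
  {μ | G.IsCycle hn μ ∧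
    ∃ (k : ℕ) (hk : 0 < k) (N : Set (G.Path n)), IsOpen N ∧ μ ∈ N ∧
      (∀ α β : G.Path (k * n), G.BlocksIn N α → G.BlocksIn N β → α ≠ β →
        ¬ ∃ γ ∈ N, G.pathRange hn γ = G.pathSource (Nat.mul_pos hk hn) α ∧
          G.pathSource hn γ = G.pathSource (Nat.mul_pos hk hn) β) ∧
      (∀ α : G.Path (k * n), G.BlocksIn N α →
        ¬ ∃ γ ∈ N, G.IsCycle hn γ ∧ G.HasEntrance γ ∧
          G.pathRange hn γ = G.pathSource (Nat.mul_pos hk hn) α)}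

/-- The infinite path space `E^∞`, with the subspace topology of the product. -/
def InfPath : Type := {x : ℕ → E // ∀ i : ℕ, G.s (x i) = G.r (x (i + 1))}

instance : TopologicalSpace G.InfPath :=
  inferInstanceAs (TopologicalSpace {x : ℕ → E // ∀ i : ℕ, G.s (x i) = G.r (x (i + 1))})

/-- The one-sided shift on `E^∞`. -/
def shift (x : G.InfPath) : G.InfPath := ⟨fun i => x.1 (i + 1), fun i => x.2 (i + 1)⟩

/-- The segment `x_{a+1} ⋯ x_{a+len}` (0-indexed: edges `a, …, a+len-1`) of an infinite path. -/
def segment (x : G.InfPath) (a len : ℕ) : G.Path len :=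
  ⟨fun i => x.1 (a + (i : ℕ)), fun i _ => x.2 (a + i)⟩

/-- The boundary path groupoid `Γ(E^∞, σ)` as a set. -/
def Gamma : Type :=
  {g : G.InfPath × ℤ × G.InfPath //
    ∃ k l : ℕ, g.2.1 = (k : ℤ) - (l : ℤ) ∧ G.shift^[k] g.1 = G.shift^[l] g.2.2}

/-- Basic sets `U(U, W, k, l)` for the topology of `Γ(E^∞, σ)`. -/
def basicSet (U W : Set G.InfPath) (k l : ℕ) : Set G.Gamma :=
  {g | g.1.1 ∈ U ∧ g.1.2.2 ∈ W ∧ g.1.2.1 = (k : ℤ) - (l : ℤ) ∧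
    G.shift^[k] g.1.1 = G.shift^[l] g.1.2.2}

/-- The topology on `Γ(E^∞, σ)` generated by the sets `U(U, W, k, l)` with `U, W` open
and `σ^k`, `σ^l` injective on `U` resp. `W`. -/
instance : TopologicalSpace G.Gamma :=
  TopologicalSpace.generateFrom
    {S | ∃ (U W : Set G.InfPath) (k l : ℕ), IsOpen U ∧ IsOpen W ∧
      Set.InjOn (G.shift^[k]) U ∧ Set.InjOn (G.shift^[l]) W ∧ S = G.basicSet U W k l}

/-- The isotropy group bundle `Iso(Γ(E^∞, σ))`. -/
def isoSet : Set G.Gamma := {g | g.1.1 = g.1.2.2}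

/-- The interior of the isotropy group bundle. -/
def isoInterior : Set G.Gamma := interior G.isoSet

/-- The set `E^0_fin` of finite receivers. -/
def finRecv : Set V := {v | ∃ N : Set V, IsOpen N ∧ v ∈ N ∧ IsCompact (G.r ⁻¹' closure N)}

/-- The set `E^0_sce` of sources. -/
def sce : Set V := (closure (Set.range G.r))ᶜ

/-- The set `E^0_rg` of regular vertices. -/
def rg : Set V := G.finRecv \ closure G.sce

/-- The set `E^0_sg` of singular vertices. -/
def sg : Set V := G.rgᶜ

/-- The set `V_n` of vertices having an open neighbourhood consisting of base points of
cycles without entrances in `E^n`. -/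
def Vset (n : ℕ) (hn : 0 < n) : Set V :=
  {v | ∃ W : Set V, IsOpen W ∧ v ∈ W ∧
    ∀ w ∈ W, ∃ γ : G.Path n, G.IsCycle hn γ ∧ ¬ G.HasEntrance γ ∧ G.pathRange hn γ = w}

/-- `E` is topologically free if the set of base points of cycles without entrances has
empty interior. -/
def TopologicallyFree : Prop :=
  interior {v : V | ∃ (n : ℕ) (hn : 0 < n) (γ : G.Path n),
    G.IsCycle hn γ ∧ ¬ G.HasEntrance γ ∧ G.pathRange hn γ = v} = ∅

/-- The groupoid `Γ(E^∞, σ)` is essentially free if the set of units with trivial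
isotropy is dense. -/
def EssentiallyFree : Prop :=
  Dense {x : G.InfPath | ∀ g : G.Gamma, g.1.1 = x → g.1.2.2 = x → g.1.2.1 = 0}

end TopGraph
namespace TopGraph

variable {V E : Type} [TopologicalSpace V] [TopologicalSpace E] (G : TopGraph V E)

lemma shift_coord (x : G.InfPath) (k i : ℕ) : (G.shift^[k] x).1 i = x.1 (i + k) := by
  induction k generalizing x with
  | zero => rfl
  | succ k ih =>
    rw [Function.iterate_succ_apply, ih]
    rfl

lemma continuous_coord (i : ℕ) : Continuous (fun y : G.InfPath => y.1 i) :=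
  (continuous_apply i).comp continuous_subtype_val

lemma continuous_shift : Continuous G.shift :=
  Continuous.subtype_mk (continuous_pi fun i => G.continuous_coord (i + 1)) _

lemma continuous_shift_iterate (k : ℕ) : Continuous (G.shift^[k]) :=
  G.continuous_shift.iterate k

lemma sOpenMap : IsOpenMap G.s := G.s_locHomeo.isOpenMap

/-- local injectivity of iterated shift -/
lemma exists_inj_nbhd (x : G.InfPath) (k : ℕ) :
    ∃ U : Set G.InfPath, IsOpen U ∧ x ∈ U ∧ Set.InjOn (G.shift^[k]) U := by
  choose e he hfe using fun a : E => G.s_locHomeo a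
  refine ⟨⋂ i ∈ Finset.range k, {y : G.InfPath | y.1 i ∈ (e (x.1 i)).source}, ?_, ?_, ?_⟩
  · exact isOpen_biInter_finset fun i _ =>
      (e (x.1 i)).open_source.preimage (G.continuous_coord i)
  · exact Set.mem_iInter₂.mpr fun i _ => he (x.1 i)
  · intro y hy z hz hyz
    have hy' : ∀ i, i < k → y.1 i ∈ (e (x.1 i)).source := fun i hi =>
      Set.mem_iInter₂.mp hy i (Finset.mem_range.mpr hi)
    have hz' : ∀ i, i < k → z.1 i ∈ (e (x.1 i)).source := fun i hi =>
      Set.mem_iInter₂.mp hz i (Finset.mem_range.mpr hi)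
    have key : ∀ n j, y.1 (k - n + j) = z.1 (k - n + j) := by
      intro n
      induction n with
      | zero =>
        intro j
        have h0 := congrArg (fun w : G.InfPath => w.1 j) hyz
        simp only [G.shift_coord] at h0
        have : k - 0 + j = j + k := by omega
        rw [this]; exact h0
      | succ n ih =>
        intro j
        by_cases hk : k ≤ n
        · have : k - (n + 1) = k - n := by omega
          rw [this]; exact ih j
        · push_neg at hk
          cases j with
          | succ j =>
            have : k - (n + 1) + (j + 1) = k - n + j := by omega
            rw [this]; exact ih j
          | zero =>
            have hik : k - (n + 1) < k := by omega
            set i := k - (n + 1) with hi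
            have h1 : y.1 (i + 1) = z.1 (i + 1) := by
              have h2 := ih 0
              have : k - n + 0 = i + 1 := by omega
              rwa [this] at h2
            have hs : G.s (y.1 i) = G.s (z.1 i) := by
              rw [y.2 i, z.2 i, h1]
            simp only [hfe (x.1 i)] at hs
            have := (e (x.1 i)).injOn (hy' i hik) (hz' i hik) hs
            simpa using this
    apply Subtype.ext
    funext j
    have := key k j
    simpa using this

/-- cylinder neighbourhoods -/
lemma exists_cylinder {C : Set G.InfPath} (hC : IsOpen C) {x : G.InfPath} (hx : x ∈ C) :
    ∃ (N : ℕ) (D : ℕ → Set E), (∀ j, IsOpen (D j)) ∧ (∀ j, x.1 j ∈ D j) ∧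
      {y : G.InfPath | ∀ j, j < N → y.1 j ∈ D j} ⊆ C := by
  obtain ⟨C₀, hC₀, hpre⟩ := (isOpen_induced_iff (f := (Subtype.val : G.InfPath → (ℕ → E)))).mp hC
  have hx₀ : x.1 ∈ C₀ := by
    have : x ∈ Subtype.val ⁻¹' C₀ := by rw [hpre]; exact hx
    exact this
  obtain ⟨I, u, hu, hsub⟩ := isOpen_pi_iff.mp hC₀ x.1 hx₀
  refine ⟨(I.sup id) + 1, fun j => if j ∈ I then u j else Set.univ, ?_, ?_, ?_⟩
  · intro j
    by_cases h : j ∈ I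
    · simpa [h] using (hu j h).1
    · simp [h]
  · intro j
    by_cases h : j ∈ I
    · simpa [h] using (hu j h).2
    · simp [h]
  · intro y hy
    have : y.1 ∈ (I : Set ℕ).pi u := by
      intro i hi
      have hiI : i ∈ I := hi
      have hle : i ≤ I.sup id := Finset.le_sup (f := id) hiI
      have := hy i (by omega)
      simpa [hiI] using this
    have : y.1 ∈ C₀ := hsub this
    have : y ∈ Subtype.val ⁻¹' C₀ := this
    rwa [hpre] at this

end TopGraph
namespace TopGraph

variable {V E : Type} [TopologicalSpace V] [TopologicalSpace E] (G : TopGraph V E)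

/-- regular vertices receive an edge -/
lemma receives [T2Space V] (hsg : G.sg = ∅) (v : V) : ∃ e : E, G.r e = v := by
  have hv : v ∈ G.rg := by
    by_contra h
    have : v ∈ G.sg := h
    rw [hsg] at this
    exact this
  obtain ⟨⟨Nv, hNo, hvN, hK⟩, hcl⟩ := hv
  by_contra hne
  push_neg at hne
  have hFc : IsClosed (G.r '' (G.r ⁻¹' closure Nv)) := (hK.image G.r_cont).isClosed
  have hvF : v ∉ G.r '' (G.r ⁻¹' closure Nv) := by
    rintro ⟨a, -, ha⟩
    exact hne a ha
  have hv1 : v ∉ G.sce := fun h => hcl (subset_closure h)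
  have hv2 : v ∈ closure (Set.range G.r) := by
    by_contra h
    exact hv1 h
  obtain ⟨w, ⟨hw1, hw2⟩, a, ha⟩ := mem_closure_iff.mp hv2 (Nv ∩ (G.r '' (G.r ⁻¹' closure Nv))ᶜ)
    (hNo.inter hFc.isOpen_compl) ⟨hvN, hvF⟩
  exact hw2 ⟨a, by rw [Set.mem_preimage, ha]; exact subset_closure hw1, ha⟩

/-- every vertex is the range of an infinite path -/
lemma exists_tail [T2Space V] (hsg : G.sg = ∅) (v : V) :
    ∃ t : G.InfPath, G.r (t.1 0) = v := by
  choose φ hφ using G.receives hsg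
  exact ⟨⟨fun n => Nat.rec (φ v) (fun _ prev => φ (G.s prev)) n,
    fun i => (hφ _).symm⟩, hφ v⟩

/-- threading a backward chain through a tower of open sets -/
lemma chain {A : ℕ → Set E} (hA : ∀ j, A (j + 1) ⊆ G.r ⁻¹' (G.s '' A j)) :
    ∀ (m : ℕ) (v : V), v ∈ G.s '' A m →
      ∃ f : ℕ → E, (∀ j, j ≤ m → f j ∈ A j) ∧ G.s (f m) = v ∧
        ∀ j, j < m → G.s (f j) = G.r (f (j + 1)) := by
  intro m
  induction m with
  | zero =>
    rintro v ⟨a, ha, rfl⟩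
    refine ⟨fun _ => a, fun j hj => ?_, rfl, fun j hj => by omega⟩
    have : j = 0 := by omega
    rw [this]; exact ha
  | succ m ih =>
    rintro v ⟨a, ha, rfl⟩
    obtain ⟨f', hf'A, hf's, hf'p⟩ := ih (G.r a) (hA m ha)
    refine ⟨fun j => if j ≤ m then f' j else a, fun j hj => ?_, ?_, fun j hj => ?_⟩
    · by_cases h : j ≤ m
      · simpa [h] using hf'A j h
      · have : j = m + 1 := by omega
        simp [h, this, ha]
    · have h : ¬ (m + 1 ≤ m) := by omega
      simp [h]
    · by_cases h : j < m
      · have h1 : j ≤ m := by omega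
        have h2 : j + 1 ≤ m := by omega
        simpa [h1, h2] using hf'p j h
      · have hj' : j = m := by omega
        subst hj'
        have h2 : ¬ (j + 1 ≤ j) := by omega
        simpa [h2] using hf's

end TopGraph
namespace TopGraph

variable {V E : Type} [TopologicalSpace V] [TopologicalSpace E] (G : TopGraph V E)

lemma key [T2Space V] (hsg : G.sg = ∅) {C : Set G.InfPath} (hC : IsOpen C)
    {x : G.InfPath} (hx : x ∈ C) {p L : ℕ} (hp : 0 < p)
    (hper : G.shift^[L + p] x = G.shift^[L] x)
    (hrig : ∀ y, y ∈ C → ∀ z, z ∈ C → G.shift^[L + p] y = G.shift^[L] z → y = z) :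
    ¬ G.TopologicallyFree := by
  -- coordinatewise periodicity of x
  have hperc : ∀ j, L ≤ j → x.1 (j + p) = x.1 j := by
    intro j hj
    have h0 := congrArg (fun w : G.InfPath => w.1 (j - L)) hper
    simp only [G.shift_coord] at h0
    have e1 : j - L + (L + p) = j + p := by omega
    have e2 : j - L + L = j := by omega
    rwa [e1, e2] at h0
  have per' : ∀ j, L ≤ j → x.1 j = x.1 (L + (j - L) % p) := by
    intro j
    induction j using Nat.strong_induction_on with
    | _ j ih =>
      intro hj
      by_cases hjp : j < L + p
      · have h1 : (j - L) % p = j - L := Nat.mod_eq_of_lt (by omega)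
        have h4 : L + (j - L) = j := by omega
        rw [h1, h4]
      · have h1 : x.1 j = x.1 (j - p) := by
          have h0 := hperc (j - p) (by omega)
          have h4 : j - p + p = j := by omega
          rw [h4] at h0
          exact h0
        have h2 : (j - p - L) % p = (j - L) % p := by
          have h3 : j - L = (j - p - L) + p := by omega
          rw [h3, Nat.add_mod_right]
        rw [h1, ih (j - p) (by omega) (by omega), h2]
  -- cylinder inside C
  obtain ⟨N₀, D, hDo, hxD, hDC⟩ := G.exists_cylinder hC hx
  set N := max N₀ (L + p) with hN
  have hNLp : L + p ≤ N := le_max_right _ _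
  have hCyl : {y : G.InfPath | ∀ j, j < N → y.1 j ∈ D j} ⊆ C := by
    intro y hy
    exact hDC fun j hj => hy j (by omega)
  -- injectivity neighbourhoods around the cycle
  choose es hes hfes using fun a : E => G.s_locHomeo a
  set S : ℕ → Set E := fun t => (es (x.1 (L + t))).source with hS
  have hSinj : ∀ t, Set.InjOn G.s (S t) := by
    intro t
    rw [hfes (x.1 (L + t))]
    exact (es (x.1 (L + t))).injOn
  have hSopen : ∀ t, IsOpen (S t) := fun t => (es (x.1 (L + t))).open_source
  have hSmem : ∀ t, x.1 (L + t) ∈ S t := fun t => hes (x.1 (L + t))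
  -- the base tower
  set base : ℕ → Set E := fun j =>
    (if j < N then D j else Set.univ) ∩ (if L ≤ j then S ((j - L) % p) else Set.univ)
    with hbase
  have hbaseo : ∀ j, IsOpen (base j) := by
    intro j
    apply IsOpen.inter <;> split
    · exact hDo j
    · exact isOpen_univ
    · exact hSopen _
    · exact isOpen_univ
  have hxbase : ∀ j, x.1 j ∈ base j := by
    intro j
    constructor
    · split
      · exact hxD j
      · trivial
    · split
      · next hL =>
        have := per' j hL
        rw [this]
        exact hSmem _
      · trivial
  have hbaseD : ∀ j, j < N → base j ⊆ D j := by
    intro j hj a ha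
    have := ha.1
    rwa [if_pos hj] at this
  have hbaseS : ∀ j, L ≤ j → base j ⊆ S ((j - L) % p) := by
    intro j hj a ha
    have := ha.2
    rwa [if_pos hj] at this
  -- refined tower
  set D' : ℕ → Set E := fun j =>
    Nat.rec (base 0) (fun j' prev => base (j' + 1) ∩ G.r ⁻¹' (G.s '' prev)) j with hD'
  have hD'o : ∀ j, IsOpen (D' j) := by
    intro j
    induction j with
    | zero => exact hbaseo 0
    | succ j ih => exact (hbaseo (j + 1)).inter ((G.sOpenMap _ ih).preimage G.r_cont)
  have hxD' : ∀ j, x.1 j ∈ D' j := by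
    intro j
    induction j with
    | zero => exact hxbase 0
    | succ j ih =>
      refine ⟨hxbase (j + 1), ?_⟩
      have : G.r (x.1 (j + 1)) = G.s (x.1 j) := (x.2 j).symm
      rw [Set.mem_preimage, this]
      exact ⟨x.1 j, ih, rfl⟩
  have hD'base : ∀ j, D' j ⊆ base j := by
    intro j
    cases j with
    | zero => exact fun a ha => ha
    | succ j => exact Set.inter_subset_left
  have hD'r : ∀ j, D' (j + 1) ⊆ G.r ⁻¹' (G.s '' D' j) := fun j => Set.inter_subset_right
  -- length constants
  set q : ℕ := (N - L) / p + 2 with hq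
  set M : ℕ := L + p * q with hM
  have hdm := Nat.div_add_mod (N - L) p
  have hmlt : (N - L) % p < p := Nat.mod_lt _ hp
  have hpq : p * q = p * ((N - L) / p) + p * 2 := by rw [hq, Nat.mul_add]
  have hMN : N + p ≤ M := by omega
  have hM2 : L + 2 * p ≤ M := by omega
  have hMm : (M + p - 1 - L) % p = p - 1 := by
    have h1 : M + p - 1 - L = p * q + (p - 1) := by omega
    rw [h1, Nat.mul_add_mod, Nat.mod_eq_of_lt (by omega)]
  -- the open set of base points
  set O : Set V := G.s '' D' (M - 1) ∩ G.s '' D' (M + p - 1) with hO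
  have hOopen : IsOpen O := (G.sOpenMap _ (hD'o _)).inter (G.sOpenMap _ (hD'o _))
  have hv0 : G.s (x.1 (M - 1)) ∈ O := by
    constructor
    · exact ⟨x.1 (M - 1), hxD' _, rfl⟩
    · refine ⟨x.1 (M + p - 1), hxD' _, ?_⟩
      have h0 := hperc (M - 1) (by omega)
      have h1 : M - 1 + p = M + p - 1 := by omega
      rw [h1] at h0
      rw [h0]
  have hOsub : O ⊆ {v : V | ∃ (n : ℕ) (hn : 0 < n) (γ : G.Path n),
      G.IsCycle hn γ ∧ ¬ G.HasEntrance γ ∧ G.pathRange hn γ = v} := by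
    rintro v ⟨hv1, hv2⟩
    obtain ⟨f, hfA, hfs, hfp⟩ := G.chain hD'r (M + p - 1) v hv2
    obtain ⟨g, hgA, hgs, hgp⟩ := G.chain hD'r (M - 1) v hv1
    obtain ⟨t, ht⟩ := G.exists_tail hsg v
    -- the two infinite paths
    set yf : ℕ → E := fun j => if j < M + p then f j else t.1 (j - (M + p)) with hyf
    have hyP : ∀ n : ℕ, G.s (yf n) = G.r (yf (n + 1)) := by
      intro n
      by_cases h1 : n + 1 < M + p
      · have h0 : n < M + p := by omega
        simp only [hyf, if_pos h0, if_pos h1]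
        exact hfp n (by omega)
      · by_cases h2 : n + 1 = M + p
        · have h0 : n < M + p := by omega
          simp only [hyf, if_pos h0, if_neg h1]
          have h3 : n = M + p - 1 := by omega
          have h4 : n + 1 - (M + p) = 0 := by omega
          rw [h4, h3, hfs, ht]
        · have h0 : ¬ n < M + p := by omega
          simp only [hyf, if_neg h0, if_neg h1]
          have h4 : n + 1 - (M + p) = (n - (M + p)) + 1 := by omega
          rw [h4]
          exact t.2 _
    set y : G.InfPath := ⟨yf, hyP⟩ with hy
    set zf : ℕ → E := fun j => if j < M then g j else t.1 (j - M) with hzf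
    have hzP : ∀ n : ℕ, G.s (zf n) = G.r (zf (n + 1)) := by
      intro n
      by_cases h1 : n + 1 < M
      · have h0 : n < M := by omega
        simp only [hzf, if_pos h0, if_pos h1]
        exact hgp n (by omega)
      · by_cases h2 : n + 1 = M
        · have h0 : n < M := by omega
          simp only [hzf, if_pos h0, if_neg h1]
          have h3 : n = M - 1 := by omega
          have h4 : n + 1 - M = 0 := by omega
          rw [h4, h3, hgs, ht]
        · have h0 : ¬ n < M := by omega
          simp only [hzf, if_neg h0, if_neg h1]
          have h4 : n + 1 - M = (n - M) + 1 := by omega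
          rw [h4]
          exact t.2 _
    set z : G.InfPath := ⟨zf, hzP⟩ with hz
    have hyC : y ∈ C := by
      apply hCyl
      intro j hj
      show yf j ∈ D j
      simp only [hyf, if_pos (show j < M + p by omega)]
      exact hbaseD j hj (hD'base j (hfA j (by omega)))
    have hzC : z ∈ C := by
      apply hCyl
      intro j hj
      show zf j ∈ D j
      simp only [hzf, if_pos (show j < M by omega)]
      exact hbaseD j hj (hD'base j (hgA j (by omega)))
    -- the backward chains agree up to a shift by p
    have hEF : ∀ d j, j + d = M - 1 → L ≤ j → f (j + p) = g j := by
      intro d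
      induction d with
      | zero =>
        intro j hj hL
        have hjM : j = M - 1 := by omega
        subst hjM
        apply hSinj ((M - 1 - L) % p)
        · have h1 : M - 1 + p = M + p - 1 := by omega
          rw [h1]
          have h2 := hbaseS (M + p - 1) (by omega) (hD'base _ (hfA _ (by omega)))
          have h3 : (M + p - 1 - L) % p = (M - 1 - L) % p := by
            have h4 : M + p - 1 - L = (M - 1 - L) + p := by omega
            rw [h4, Nat.add_mod_right]
          rwa [h3] at h2
        · exact hbaseS (M - 1) (by omega) (hD'base _ (hgA _ (by omega)))
        · have h1 : M - 1 + p = M + p - 1 := by omega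
          rw [h1, hfs, hgs]
      | succ d ih =>
        intro j hj hL
        apply hSinj ((j - L) % p)
        · have h2 := hbaseS (j + p) (by omega) (hD'base _ (hfA _ (by omega)))
          have h3 : (j + p - L) % p = (j - L) % p := by
            have h4 : j + p - L = (j - L) + p := by omega
            rw [h4, Nat.add_mod_right]
          rwa [h3] at h2
        · exact hbaseS j hL (hD'base _ (hgA _ (by omega)))
        · have h5 : G.s (f (j + p)) = G.r (f (j + p + 1)) := hfp _ (by omega)
          have h6 : G.s (g j) = G.r (g (j + 1)) := hgp _ (by omega)
          have h7 : f (j + 1 + p) = g (j + 1) := ih (j + 1) (by omega) (by omega)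
          have h8 : j + p + 1 = j + 1 + p := by omega
          rw [h5, h8, h7]
          exact h6.symm
    -- rigidity
    have hyz : G.shift^[L + p] y = G.shift^[L] z := by
      apply Subtype.ext
      funext j
      show (G.shift^[L + p] y).1 j = (G.shift^[L] z).1 j
      rw [G.shift_coord, G.shift_coord]
      show yf (j + (L + p)) = zf (j + L)
      by_cases h1 : j + L < M
      · have h2 : j + (L + p) < M + p := by omega
        simp only [hyf, hzf, if_pos h1, if_pos h2]
        have h3 : j + (L + p) = (j + L) + p := by omega
        rw [h3]
        exact hEF (M - 1 - (j + L)) (j + L) (by omega) (by omega)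
      · have h2 : ¬ j + (L + p) < M + p := by omega
        simp only [hyf, hzf, if_neg h1, if_neg h2]
        have h3 : j + (L + p) - (M + p) = j + L - M := by omega
        rw [h3]
    have hFeq : y = z := hrig y hyC z hzC hyz
    have hfg : ∀ j, j < M → f j = g j := by
      intro j hj
      have h0 : yf j = zf j := congrArg (fun w : G.InfPath => w.1 j) hFeq
      simp only [hyf, hzf, if_pos (show j < M + p by omega), if_pos hj] at h0
      exact h0
    have hfper : ∀ j, L ≤ j → j ≤ M - 1 → f (j + p) = f j := by
      intro j h1 h2
      rw [hEF (M - 1 - j) j (by omega) h1]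
      exact (hfg j (by omega)).symm
    have hflem : ∀ j, L ≤ j → j < M + p → f j = f (L + (j - L) % p) := by
      intro j
      induction j using Nat.strong_induction_on with
      | _ j ih =>
        intro hL hM'
        by_cases hjp : j < L + p
        · have h1 : (j - L) % p = j - L := Nat.mod_eq_of_lt (by omega)
          have h4 : L + (j - L) = j := by omega
          rw [h1, h4]
        · have h1 : f j = f (j - p) := by
            have h0 := hfper (j - p) (by omega) (by omega)
            have h4 : j - p + p = j := by omega
            rwa [h4] at h0
          have h2 : (j - p - L) % p = (j - L) % p := by
            have h3 : j - L = (j - p - L) + p := by omega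
            rw [h3, Nat.add_mod_right]
          rw [h1, ih (j - p) (by omega) (by omega) (by omega), h2]
    -- the cycle
    have hμP : G.IsPathFn (fun i : Fin p => f (L + (i : ℕ))) := by
      intro i hi
      show G.s (f (L + i)) = G.r (f (L + (i + 1)))
      have h1 := hfp (L + i) (by omega)
      have h2 : L + i + 1 = L + (i + 1) := by omega
      rwa [h2] at h1
    set μ : G.Path p := ⟨fun i => f (L + (i : ℕ)), hμP⟩ with hμ
    have hr1 : G.r (f (L + p)) = G.s (f (L + p - 1)) := by
      have h0 := hfp (L + p - 1) (by omega)
      have h4 : L + p - 1 + 1 = L + p := by omega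
      rw [h4] at h0
      exact h0.symm
    have hr2 : f (L + p) = f L := hfper L le_rfl (by omega)
    have hrs : G.r (f L) = G.s (f (L + (p - 1))) := by
      have h4 : L + (p - 1) = L + p - 1 := by omega
      rw [h4, ← hr1, hr2]
    have hcyc : G.IsCycle hp μ := by
      show G.r (f (L + ((⟨0, hp⟩ : Fin p) : ℕ))) = G.s (f (L + ((⟨p - 1, _⟩ : Fin p) : ℕ)))
      exact hrs
    have hfM : f (L + (p - 1)) = f (M + p - 1) := by
      have h1 := hflem (M + p - 1) (by omega) (by omega)
      rw [hMm] at h1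
      exact h1.symm
    have hbasept : G.pathRange hp μ = v := by
      show G.r (f (L + ((⟨0, hp⟩ : Fin p) : ℕ))) = v
      rw [show L + ((⟨0, hp⟩ : Fin p) : ℕ) = L from rfl, hrs, hfM, hfs]
    -- no entrance
    have hnoent : ¬ G.HasEntrance μ := by
      rintro ⟨i, ed, hre, hne⟩
      have hre' : G.r ed = G.r (f (L + (i : ℕ))) := hre
      have hij : (i : ℕ) < p := i.2
      have hj0N : L + (i : ℕ) < N := by omega
      set a := N - (L + (i : ℕ)) with ha
      have hdm2 := Nat.div_add_mod (a - 1) p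
      have hmlt2 : (a - 1) % p < p := Nat.mod_lt _ hp
      set J := L + (i : ℕ) + p * ((a - 1) / p + 1) with hJ
      have hpJ : p * ((a - 1) / p + 1) = p * ((a - 1) / p) + p * 1 := by rw [Nat.mul_add]
      have hJN : N ≤ J := by omega
      have hJNp : J < N + p := by omega
      have hJM : J < M := by omega
      have hJmod : (J - L) % p = (i : ℕ) := by
        have h1 : J - L = (i : ℕ) + p * ((a - 1) / p + 1) := by omega
        rw [h1, Nat.add_mul_mod_self_left, Nat.mod_eq_of_lt hij]
      have hfJ : f J = f (L + (i : ℕ)) := by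
        have h1 := hflem J (by omega) (by omega)
        rwa [hJmod] at h1
      obtain ⟨t2, ht2⟩ := G.exists_tail hsg (G.s ed)
      set Zf : ℕ → E := fun j => if j < J then f j else if j = J then ed
        else t2.1 (j - J - 1) with hZf
      have hZP : ∀ n : ℕ, G.s (Zf n) = G.r (Zf (n + 1)) := by
        intro n
        rcases lt_trichotomy (n + 1) J with h1 | h1 | h1
        · have h0 : n < J := by omega
          simp only [hZf, if_pos h0, if_pos h1]
          exact hfp n (by omega)
        · have h0 : n < J := by omega
          simp only [hZf, if_pos h0, if_neg (show ¬ n + 1 < J by omega), if_pos h1]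
          have h5 := hfp n (by omega)
          rw [h1] at h5
          rw [h5, hfJ, ← hre']
        · by_cases h2 : n = J
          · simp only [hZf, if_neg (show ¬ n < J by omega), if_pos h2,
              if_neg (show ¬ n + 1 < J by omega), if_neg (show ¬ n + 1 = J by omega)]
            have h4 : n + 1 - J - 1 = 0 := by omega
            rw [h4, ht2]
          · simp only [hZf, if_neg (show ¬ n < J by omega), if_neg h2,
              if_neg (show ¬ n + 1 < J by omega), if_neg (show ¬ n + 1 = J by omega)]
            have h4 : n + 1 - J - 1 = (n - J - 1) + 1 := by omega
            rw [h4]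
            exact t2.2 _
      set Z : G.InfPath := ⟨Zf, hZP⟩ with hZ
      set Yf : ℕ → E := fun j => if j < J + p then f j else if j = J + p then ed
        else t2.1 (j - (J + p) - 1) with hYf
      have hYP : ∀ n : ℕ, G.s (Yf n) = G.r (Yf (n + 1)) := by
        intro n
        rcases lt_trichotomy (n + 1) (J + p) with h1 | h1 | h1
        · have h0 : n < J + p := by omega
          simp only [hYf, if_pos h0, if_pos h1]
          exact hfp n (by omega)
        · have h0 : n < J + p := by omega
          simp only [hYf, if_pos h0, if_neg (show ¬ n + 1 < J + p by omega), if_pos h1]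
          have h5 := hfp n (by omega)
          rw [h1] at h5
          have h6 : f (J + p) = f J := hfper J (by omega) (by omega)
          rw [h5, h6, hfJ, ← hre']
        · by_cases h2 : n = J + p
          · simp only [hYf, if_neg (show ¬ n < J + p by omega), if_pos h2,
              if_neg (show ¬ n + 1 < J + p by omega), if_neg (show ¬ n + 1 = J + p by omega)]
            have h4 : n + 1 - (J + p) - 1 = 0 := by omega
            rw [h4, ht2]
          · simp only [hYf, if_neg (show ¬ n < J + p by omega), if_neg h2,
              if_neg (show ¬ n + 1 < J + p by omega), if_neg (show ¬ n + 1 = J + p by omega)]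
            have h4 : n + 1 - (J + p) - 1 = (n - (J + p) - 1) + 1 := by omega
            rw [h4]
            exact t2.2 _
      set Y : G.InfPath := ⟨Yf, hYP⟩ with hY
      have hYC : Y ∈ C := by
        apply hCyl
        intro j hj
        show Yf j ∈ D j
        simp only [hYf, if_pos (show j < J + p by omega)]
        exact hbaseD j hj (hD'base j (hfA j (by omega)))
      have hZC : Z ∈ C := by
        apply hCyl
        intro j hj
        show Zf j ∈ D j
        simp only [hZf, if_pos (show j < J by omega)]
        exact hbaseD j hj (hD'base j (hfA j (by omega)))
      have hYZ : G.shift^[L + p] Y = G.shift^[L] Z := by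
        apply Subtype.ext
        funext j
        show (G.shift^[L + p] Y).1 j = (G.shift^[L] Z).1 j
        rw [G.shift_coord, G.shift_coord]
        show Yf (j + (L + p)) = Zf (j + L)
        rcases lt_trichotomy (j + L) J with h1 | h1 | h1
        · have h2 : j + (L + p) < J + p := by omega
          simp only [hYf, hZf, if_pos h1, if_pos h2]
          have h3 : j + (L + p) = (j + L) + p := by omega
          rw [h3]
          exact hfper (j + L) (by omega) (by omega)
        · simp only [hYf, hZf, if_neg (show ¬ j + L < J by omega), if_pos h1,
            if_neg (show ¬ j + (L + p) < J + p by omega),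
            if_pos (show j + (L + p) = J + p by omega)]
        · simp only [hYf, hZf, if_neg (show ¬ j + L < J by omega),
            if_neg (show ¬ j + L = J by omega),
            if_neg (show ¬ j + (L + p) < J + p by omega),
            if_neg (show ¬ j + (L + p) = J + p by omega)]
          have h3 : j + (L + p) - (J + p) - 1 = j + L - J - 1 := by omega
          rw [h3]
      have hfin : Y = Z := hrig Y hYC Z hZC hYZ
      have h0 : Yf J = Zf J := congrArg (fun w : G.InfPath => w.1 J) hfin
      simp only [hYf, hZf, if_pos (show J < J + p by omega), if_neg (lt_irrefl J),
        if_pos rfl, if_true] at h0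
      apply hne
      show ed = f (L + (i : ℕ))
      rw [← h0]
      exact hfJ
    exact ⟨p, hp, μ, hcyc, hnoent, hbasept⟩
  intro htf
  have htf' : interior {v : V | ∃ (n : ℕ) (hn : 0 < n) (γ : G.Path n),
      G.IsCycle hn γ ∧ ¬ G.HasEntrance γ ∧ G.pathRange hn γ = v} = ∅ := htf
  have hmem := interior_maximal hOsub hOopen hv0
  rw [htf'] at hmem
  exact hmem


end TopGraph
namespace TopGraph

variable {V E : Type} [TopologicalSpace V] [TopologicalSpace E] (G : TopGraph V E)

/-- The generating family of the topology on `Γ`. -/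
def basisFam : Set (Set G.Gamma) :=
  {S | ∃ (U W : Set G.InfPath) (k l : ℕ), IsOpen U ∧ IsOpen W ∧
    Set.InjOn (G.shift^[k]) U ∧ Set.InjOn (G.shift^[l]) W ∧ S = G.basicSet U W k l}

lemma aux_inter {U W U' W' : Set G.InfPath} {k l k' l' : ℕ}
    (hUo : IsOpen U) (hWo : IsOpen W) (hU'o : IsOpen U') (hW'o : IsOpen W')
    (hUi : Set.InjOn (G.shift^[k]) U) (hWi : Set.InjOn (G.shift^[l]) W)
    (hU'i : Set.InjOn (G.shift^[k']) U') (hW'i : Set.InjOn (G.shift^[l']) W')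
    (hkk : k ≤ k') {g : G.Gamma} (hg : g ∈ G.basicSet U W k l ∩ G.basicSet U' W' k' l') :
    ∃ T ∈ G.basisFam, g ∈ T ∧ T ⊆ G.basicSet U W k l ∩ G.basicSet U' W' k' l' := by
  obtain ⟨⟨hgU, hgW, hg2, hgs⟩, ⟨hgU', hgW', hg2', hgs'⟩⟩ := hg
  have hll : l ≤ l' ∧ k' = (k' - k) + k ∧ l' = (k' - k) + l := by
    rw [hg2] at hg2'
    omega
  obtain ⟨hll', hk'd, hl'd⟩ := hll
  set d := k' - k with hd
  obtain ⟨Q, hQo, hQm, hQi⟩ := G.exists_inj_nbhd (G.shift^[k] g.1.1) d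
  refine ⟨G.basicSet (U ∩ U' ∩ G.shift^[k] ⁻¹' Q) (W ∩ W' ∩ G.shift^[l] ⁻¹' Q) k' l',
    ⟨_, _, k', l', (hUo.inter hU'o).inter (hQo.preimage (G.continuous_shift_iterate k)),
      (hWo.inter hW'o).inter (hQo.preimage (G.continuous_shift_iterate l)),
      hU'i.mono (fun a ha => ha.1.2), hW'i.mono (fun a ha => ha.1.2), rfl⟩, ?_, ?_⟩
  · refine ⟨⟨⟨hgU, hgU'⟩, hQm⟩, ⟨⟨hgW, hgW'⟩, ?_⟩, hg2', ?_⟩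
    · show G.shift^[l] g.1.2.2 ∈ Q
      rw [← hgs]
      exact hQm
    · rw [hk'd, hl'd, Function.iterate_add_apply, Function.iterate_add_apply, hgs]
  · rintro h ⟨⟨⟨hhU, hhU'⟩, hhQ⟩, ⟨⟨hhW, hhW'⟩, hhQ'⟩, hh2, hhs⟩
    have hs2 : G.shift^[k] h.1.1 = G.shift^[l] h.1.2.2 := by
      apply hQi hhQ hhQ'
      rw [← Function.iterate_add_apply, ← Function.iterate_add_apply, ← hk'd, ← hl'd]
      exact hhs
    exact ⟨⟨hhU, hhW, by rw [hh2, ← hg2', hg2], hs2⟩, ⟨hhU', hhW', hh2, hhs⟩⟩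

lemma isBasis : TopologicalSpace.IsTopologicalBasis G.basisFam := by
  refine ⟨?_, ?_, rfl⟩
  · rintro T₁ ⟨U, W, k, l, hUo, hWo, hUi, hWi, rfl⟩ T₂ ⟨U', W', k', l', hU'o, hW'o, hU'i, hW'i, rfl⟩
      g hg
    rcases le_total k k' with hkk | hkk
    · exact G.aux_inter hUo hWo hU'o hW'o hUi hWi hU'i hW'i hkk hg
    · obtain ⟨T, hT, hgT, hTsub⟩ := G.aux_inter hU'o hW'o hUo hWo hU'i hW'i hUi hWi hkk
        (Set.inter_comm _ _ ▸ hg)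
      exact ⟨T, hT, hgT, fun a ha => ⟨(hTsub ha).2, (hTsub ha).1⟩⟩
  · rw [Set.sUnion_eq_univ_iff]
    intro g
    obtain ⟨k, l, h2, hs⟩ := g.2
    obtain ⟨U, hUo, hUm, hUi⟩ := G.exists_inj_nbhd g.1.1 k
    obtain ⟨W, hWo, hWm, hWi⟩ := G.exists_inj_nbhd g.1.2.2 l
    exact ⟨G.basicSet U W k l, ⟨U, W, k, l, hUo, hWo, hUi, hWi, rfl⟩, hUm, hWm, h2, hs⟩

/-- the unit space -/
def unitSet : Set G.Gamma := {g | g.1.2.1 = 0 ∧ g.1.1 = g.1.2.2}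

lemma unitSet_open : IsOpen G.unitSet := by
  rw [G.isBasis.isOpen_iff]
  intro g hg
  refine ⟨G.basicSet Set.univ Set.univ 0 0,
    ⟨Set.univ, Set.univ, 0, 0, isOpen_univ, isOpen_univ,
      fun a _ b _ h => by simpa using h, fun a _ b _ h => by simpa using h, rfl⟩, ?_, ?_⟩
  · exact ⟨trivial, trivial, by rw [hg.1]; norm_num, by simpa using hg.2⟩
  · rintro h ⟨-, -, h2, hs⟩
    exact ⟨by rw [h2]; norm_num, by simpa using hs⟩

lemma unitSet_closed [T2Space E] : IsClosed G.unitSet := by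
  rw [← isOpen_compl_iff, G.isBasis.isOpen_iff]
  intro g hg
  obtain ⟨k, l, h2, hs⟩ := g.2
  obtain ⟨U, hUo, hUm, hUi⟩ := G.exists_inj_nbhd g.1.1 k
  obtain ⟨W, hWo, hWm, hWi⟩ := G.exists_inj_nbhd g.1.2.2 l
  by_cases hkl : (k : ℤ) - (l : ℤ) = 0
  · -- then g.1.1 ≠ g.1.2.2
    have hkl' : k = l := by omega
    have hne : g.1.1 ≠ g.1.2.2 := by
      intro hcon
      exact hg ⟨by rw [h2, hkl], hcon⟩
    have hne' : g.1.1.1 ≠ g.1.2.2.1 := fun hcon => hne (Subtype.ext hcon)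
    obtain ⟨j, hj⟩ := Function.ne_iff.mp hne'
    obtain ⟨A, A', hAo, hA'o, hgA, hgA', hAA'⟩ := t2_separation hj
    refine ⟨G.basicSet (U ∩ {y | y.1 j ∈ A}) (W ∩ {y | y.1 j ∈ A'}) k l,
      ⟨_, _, k, l, hUo.inter (hAo.preimage (G.continuous_coord j)),
        hWo.inter (hA'o.preimage (G.continuous_coord j)),
        hUi.mono Set.inter_subset_left, hWi.mono Set.inter_subset_left, rfl⟩,
      ⟨⟨hUm, hgA⟩, ⟨hWm, hgA'⟩, h2, hs⟩, ?_⟩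
    rintro h ⟨⟨-, hhA⟩, ⟨-, hhA'⟩, -, -⟩ ⟨-, hh⟩
    have hA1 : h.1.1.1 j ∈ A := hhA
    have hA2 : h.1.2.2.1 j ∈ A' := hhA'
    have heq : h.1.1.1 j = h.1.2.2.1 j := by rw [hh]
    rw [heq] at hA1
    exact Set.disjoint_iff.mp hAA' ⟨hA1, hA2⟩
  · refine ⟨G.basicSet U W k l, ⟨U, W, k, l, hUo, hWo, hUi, hWi, rfl⟩,
      ⟨hUm, hWm, h2, hs⟩, ?_⟩
    rintro h ⟨-, -, hh2, -⟩ ⟨hcon, -⟩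
    rw [hh2] at hcon
    exact hkl hcon

end TopGraph
/-- Corollary 3.10, final claim: if `E` has no singular vertices and is topologically
free, then `Iso(Γ(E^∞,σ))°` is closed. -/
theorem stmt9 {V E : Type} [TopologicalSpace V] [TopologicalSpace E]
    [T2Space V] [T2Space E] [LocallyCompactSpace V] [LocallyCompactSpace E]
    [SecondCountableTopology V] [SecondCountableTopology E]
    (G : TopGraph V E)
    (hsg : G.sg = ∅) (hfree : G.TopologicallyFree) :
    IsClosed G.isoInterior := by
  have hbasis := G.isBasis
  have hEq : G.isoInterior = G.unitSet := by
    apply Set.Subset.antisymm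
    · intro g hg
      obtain ⟨T, ⟨U, W, k, l, hUo, hWo, hUi, hWi, rfl⟩, hgT, hTsub⟩ :=
        hbasis.exists_subset_of_mem_open hg
          (isOpen_interior : IsOpen (interior G.isoSet))
      have hTiso : G.basicSet U W k l ⊆ G.isoSet := hTsub.trans interior_subset
      have hiso : g.1.1 = g.1.2.2 := hTiso hgT
      obtain ⟨hgU, hgW, hg2, hgs⟩ := hgT
      refine ⟨?_, hiso⟩
      by_contra h2ne
      have hgW' : g.1.1 ∈ W := by rw [hiso]; exact hgW
      have hgs' : G.shift^[k] g.1.1 = G.shift^[l] g.1.1 := by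
        rw [← hiso] at hgs
        exact hgs
      have hkl : k ≠ l := by
        intro hcon
        apply h2ne
        rw [hg2, hcon]
        norm_num
      rcases Nat.lt_or_ge k l with hlt | hge
      · have hsum : k + (l - k) = l := by omega
        have hper : G.shift^[k + (l - k)] g.1.1 = G.shift^[k] g.1.1 := by
          rw [hsum]
          exact hgs'.symm
        have hrig : ∀ y, y ∈ U ∩ W → ∀ z, z ∈ U ∩ W →
            G.shift^[k + (l - k)] y = G.shift^[k] z → y = z := by
          intro y hy z hz hyz
          have hyz' : G.shift^[k] z = G.shift^[l] y := by
            rw [← hsum]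
            exact hyz.symm
          have helt : (⟨(z, (k : ℤ) - (l : ℤ), y), k, l, rfl, hyz'⟩ : G.Gamma) ∈
              G.basicSet U W k l := ⟨hz.1, hy.2, rfl, hyz'⟩
          exact (hTiso helt).symm
        exact absurd hfree
          (G.key hsg (hUo.inter hWo) ⟨hgU, hgW'⟩ (by omega : 0 < l - k) hper hrig)
      · have hlt : l < k := by omega
        have hsum : l + (k - l) = k := by omega
        have hper : G.shift^[l + (k - l)] g.1.1 = G.shift^[l] g.1.1 := by
          rw [hsum]
          exact hgs'
        have hrig : ∀ y, y ∈ U ∩ W → ∀ z, z ∈ U ∩ W →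
            G.shift^[l + (k - l)] y = G.shift^[l] z → y = z := by
          intro y hy z hz hyz
          have hyz' : G.shift^[k] y = G.shift^[l] z := by
            rw [← hsum]
            exact hyz
          have helt : (⟨(y, (k : ℤ) - (l : ℤ), z), k, l, rfl, hyz'⟩ : G.Gamma) ∈
              G.basicSet U W k l := ⟨hy.1, hz.2, rfl, hyz'⟩
          exact hTiso helt
        exact absurd hfree
          (G.key hsg (hUo.inter hWo) ⟨hgU, hgW'⟩ (by omega : 0 < k - l) hper hrig)
    · exact interior_maximal (fun g hg => hg.2) G.unitSet_open
  rw [show G.isoInterior = G.unitSet from hEq]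
  exact G.unitSet_closed
end

section
/- Let k ≥ 1 and let Λ be a row-finite k-graph without sources. Then Iso(G_Λ)° is closed in G_Λ if and only if Λ^∞_{p,q} = ∅ for all p ≠ q in ℕ^k. -/
/-- A `k`-graph: a small category `Λ` (morphisms in `Hom a b` have range `a` and
source `b`, composed path-wise) with a degree functor `d : Λ → ℕ^k` satisfying the
factorization property. -/
structure KGraph (k : ℕ) where
  Obj : Type
  Hom : Obj → Obj → Type
  id : ∀ a : Obj, Hom a a
  comp : ∀ {a b c : Obj}, Hom a b → Hom b c → Hom a c
  id_comp : ∀ {a b : Obj} (f : Hom a b), comp (id a) f = f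
  comp_id : ∀ {a b : Obj} (f : Hom a b), comp f (id b) = f
  assoc : ∀ {a b c e : Obj} (f : Hom a b) (g : Hom b c) (h : Hom c e),
    comp (comp f g) h = comp f (comp g h)
  d : ∀ {a b : Obj}, Hom a b → (Fin k → ℕ)
  d_id : ∀ a : Obj, d (id a) = 0
  d_comp : ∀ {a b c : Obj} (f : Hom a b) (g : Hom b c), d (comp f g) = d f + d g
  factor : ∀ {a b : Obj} (f : Hom a b) (m n : Fin k → ℕ), d f = m + n →
    ∃! t : Σ c : Obj, Hom a c × Hom c b,
      d t.2.1 = m ∧ d t.2.2 = n ∧ comp t.2.1 t.2.2 = f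

namespace KGraph

variable {k : ℕ} (Λ : KGraph k)

/-- `Λ` is row-finite: `vΛ^n` is finite for every vertex `v` and degree `n`. -/
def RowFinite : Prop :=
  ∀ (v : Λ.Obj) (n : Fin k → ℕ), Finite {t : Σ w : Λ.Obj, Λ.Hom v w // Λ.d t.2 = n}

/-- `Λ` has no sources: `vΛ^n ≠ ∅` for every vertex `v` and degree `n`. -/
def NoSources : Prop :=
  ∀ (v : Λ.Obj) (n : Fin k → ℕ), ∃ (w : Λ.Obj) (μ : Λ.Hom v w), Λ.d μ = n

/-- An infinite path of `Λ`: a degree-preserving functor from `Ω_k` to `Λ`. -/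
structure InfPath where
  vert : (Fin k → ℕ) → Λ.Obj
  seg : ∀ p q : Fin k → ℕ, p ≤ q → Λ.Hom (vert p) (vert q)
  seg_id : ∀ p : Fin k → ℕ, seg p p le_rfl = Λ.id (vert p)
  seg_comp : ∀ (p q r : Fin k → ℕ) (h1 : p ≤ q) (h2 : q ≤ r),
    Λ.comp (seg p q h1) (seg q r h2) = seg p r (le_trans h1 h2)
  seg_deg : ∀ (p q : Fin k → ℕ) (h : p ≤ q), Λ.d (seg p q h) = q - p

/-- The shift `σ^p` on infinite paths. -/
def shift (p : Fin k → ℕ) (x : Λ.InfPath) : Λ.InfPath where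
  vert q := x.vert (p + q)
  seg q q' h := x.seg (p + q) (p + q') (add_le_add_right h p)
  seg_id q := x.seg_id (p + q)
  seg_comp q q' q'' h1 h2 := x.seg_comp (p + q) (p + q') (p + q'') _ _
  seg_deg q q' h := by
    rw [x.seg_deg]
    funext i
    simp only [Pi.sub_apply, Pi.add_apply]
    omega

/-- `y = μ x` : the infinite path `y` is the concatenation of the finite path `μ`
with the infinite path `x`. -/
def IsPrepend {a b : Λ.Obj} (μ : Λ.Hom a b) (x y : Λ.InfPath) : Prop :=
  x.vert 0 = b ∧ y.vert 0 = a ∧ Λ.shift (Λ.d μ) y = x ∧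
    HEq (y.seg 0 (Λ.d μ) (fun _ => Nat.zero_le _)) μ

/-- `(μ, ν)` is a cycline pair: `s(μ) = s(ν)` and `μ x = ν x` for every infinite
path `x` with `x(0) = s(μ)`. -/
def Cycline {a v b w : Λ.Obj} (μ : Λ.Hom a v) (ν : Λ.Hom b w) : Prop :=
  v = w ∧ ∀ x y z : Λ.InfPath, Λ.IsPrepend μ x y → Λ.IsPrepend ν x z → y = z

/-- The cylinder set `Z(μ) ⊆ Λ^∞`. -/
def cylZ {a b : Λ.Obj} (μ : Λ.Hom a b) : Set Λ.InfPath :=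
  {y | HEq (y.seg 0 (Λ.d μ) (fun _ => Nat.zero_le _)) μ}

/-- The topology on `Λ^∞` generated by the cylinder sets `Z(μ)`. -/
instance : TopologicalSpace Λ.InfPath :=
  TopologicalSpace.generateFrom
    {S | ∃ (a b : Λ.Obj) (μ : Λ.Hom a b), S = Λ.cylZ μ}

/-- The path groupoid `G_Λ` as a set. -/
def PathGroupoid : Type :=
  {g : Λ.InfPath × (Fin k → ℤ) × Λ.InfPath //
    ∃ p q : Fin k → ℕ, (∀ i, g.2.1 i = (p i : ℤ) - (q i : ℤ)) ∧
      Λ.shift p g.1 = Λ.shift q g.2.2}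

/-- The basic set `Z(μ, ν) ⊆ G_Λ` for `μ, ν` with common source. -/
def ZZ {a b v : Λ.Obj} (μ : Λ.Hom a v) (ν : Λ.Hom b v) : Set Λ.PathGroupoid :=
  {g | ∃ x : Λ.InfPath, Λ.IsPrepend μ x g.1.1 ∧ Λ.IsPrepend ν x g.1.2.2 ∧
    ∀ i, g.1.2.1 i = (Λ.d μ i : ℤ) - (Λ.d ν i : ℤ)}

/-- The topology on `G_Λ` generated by the sets `Z(μ, ν)`. -/
instance : TopologicalSpace Λ.PathGroupoid :=
  TopologicalSpace.generateFrom
    {S | ∃ (a b v : Λ.Obj) (μ : Λ.Hom a v) (ν : Λ.Hom b v), S = Λ.ZZ μ ν}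

/-- The isotropy group bundle `Iso(G_Λ)`. -/
def isoSet : Set Λ.PathGroupoid := {g | g.1.1 = g.1.2.2}

/-- The set `Λ^∞_{p,q}` of Notation 4.4. -/
def LambdaPQ (p q : Fin k → ℕ) : Set Λ.InfPath :=
  {x | Λ.shift p x = Λ.shift q x ∧
    ∀ m : Fin k → ℕ,
      ¬ Λ.Cycline (x.seg 0 (p + m) (fun _ => Nat.zero_le _))
          (x.seg 0 (q + m) (fun _ => Nat.zero_le _)) ∧
      ∃ (c : Λ.Obj) (μ : Λ.Hom (x.vert (p + m)) c) (ν : Λ.Hom (x.vert (q + m)) c),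
        HEq μ ν ∧
        Λ.Cycline (Λ.comp (x.seg 0 (p + m) (fun _ => Nat.zero_le _)) μ)
          (Λ.comp (x.seg 0 (q + m) (fun _ => Nat.zero_le _)) ν)}

end KGraph

/-!
`Iso(G_Λ)°` is the union of the sets `Z(μ, ν)` over the cycline pairs `(μ, ν)`, and `Iso(G_Λ)` is
closed. If `g = (x, p - q, y)` with `σ^p x = σ^q y`, the sets `Z(x(p + m), y(q + m))` form a
neighbourhood base at `g`. Hence `g ∈ Iso(G_Λ)°` iff some pair `(x(p + m), y(q + m))` is cycline, and
`g` lies in the closure of `Iso(G_Λ)°` iff every such pair becomes cycline after appending a common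
path (for the converse one needs a point in the corresponding cylinder, i.e. an infinite path, and
this is where "no sources" enters). So `Λ^∞_{p,q}` is exactly the set of `x` for which `(x, p - q, x)`
lies in the closure of `Iso(G_Λ)°` but not in `Iso(G_Λ)°`, and every point of that closure has this
form because `Iso(G_Λ)` is closed.
-/

namespace KGraph

variable {k : ℕ} {Λ : KGraph k}

/-- Equality of morphisms whose endpoints are only propositionally equal (`HEq` alone would not
determine the endpoints, as `Λ.Hom` need not be injective). -/
def HomEq {a b a' b' : Λ.Obj} (f : Λ.Hom a b) (g : Λ.Hom a' b') : Prop :=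
  a = a' ∧ b = b' ∧ HEq f g

namespace HomEq

variable {a b c a' b' c' a'' b'' : Λ.Obj}

@[refl]
theorem refl (f : Λ.Hom a b) : HomEq f f := ⟨rfl, rfl, HEq.rfl⟩

theorem symm {f : Λ.Hom a b} {g : Λ.Hom a' b'} (h : HomEq f g) : HomEq g f :=
  ⟨h.1.symm, h.2.1.symm, h.2.2.symm⟩

theorem trans {f : Λ.Hom a b} {g : Λ.Hom a' b'} {e : Λ.Hom a'' b''} (h : HomEq f g)
    (h' : HomEq g e) : HomEq f e :=
  ⟨h.1.trans h'.1, h.2.1.trans h'.2.1, h.2.2.trans h'.2.2⟩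

theorem of_eq {f g : Λ.Hom a b} (h : f = g) : HomEq f g := h ▸ refl f

theorem eq {f g : Λ.Hom a b} (h : HomEq f g) : f = g := eq_of_heq h.2.2

theorem src {f : Λ.Hom a b} {g : Λ.Hom a' b'} (h : HomEq f g) : a = a' := h.1

theorem tgt {f : Λ.Hom a b} {g : Λ.Hom a' b'} (h : HomEq f g) : b = b' := h.2.1

theorem d_eq {f : Λ.Hom a b} {g : Λ.Hom a' b'} (h : HomEq f g) : Λ.d f = Λ.d g := by
  obtain ⟨rfl, rfl, h⟩ := h
  rw [eq_of_heq h]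

theorem comp {f : Λ.Hom a b} {g : Λ.Hom b c} {f' : Λ.Hom a' b'} {g' : Λ.Hom b' c'}
    (hf : HomEq f f') (hg : HomEq g g') : HomEq (Λ.comp f g) (Λ.comp f' g') := by
  obtain ⟨rfl, rfl, hf⟩ := hf
  obtain ⟨-, rfl, hg⟩ := hg
  rw [eq_of_heq hf, eq_of_heq hg]

end HomEq

theorem factor_unique {a b c a' b' c' : Λ.Obj} {f₁ : Λ.Hom a c} {f₂ : Λ.Hom c b}
    {g₁ : Λ.Hom a' c'} {g₂ : Λ.Hom c' b'} (hd : Λ.d f₁ = Λ.d g₁)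
    (h : HomEq (Λ.comp f₁ f₂) (Λ.comp g₁ g₂)) : HomEq f₁ g₁ ∧ HomEq f₂ g₂ := by
  obtain ⟨rfl, rfl, h⟩ := h
  replace h := eq_of_heq h
  have hd₂ : Λ.d f₂ = Λ.d g₂ := by
    have := congrArg Λ.d h
    rw [Λ.d_comp, Λ.d_comp, hd] at this
    exact add_left_cancel this
  obtain ⟨t, -, ht⟩ := Λ.factor (Λ.comp f₁ f₂) _ _ (Λ.d_comp f₁ f₂)
  have h₁ := ht ⟨c, f₁, f₂⟩ ⟨rfl, rfl, rfl⟩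
  have h₂ := ht ⟨c', g₁, g₂⟩ ⟨hd.symm, hd₂.symm, h.symm⟩
  obtain ⟨rfl, hfg⟩ := Sigma.mk.inj_iff.mp (h₁.trans h₂.symm)
  obtain ⟨rfl, rfl⟩ := Prod.ext_iff.mp (eq_of_heq hfg)
  exact ⟨HomEq.refl _, HomEq.refl _⟩

def IsPrefix {a c a' b : Λ.Obj} (g : Λ.Hom a c) (f : Λ.Hom a' b) : Prop :=
  ∃ w : Λ.Hom c b, HomEq (Λ.comp g w) f

namespace IsPrefix

variable {a b c a' b' c' a'' : Λ.Obj}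

theorem of_comp (g : Λ.Hom a c) (w : Λ.Hom c b) : IsPrefix g (Λ.comp g w) :=
  ⟨w, HomEq.refl _⟩

theorem refl (f : Λ.Hom a b) : IsPrefix f f := ⟨Λ.id b, HomEq.of_eq (Λ.comp_id f)⟩

theorem src_eq {g : Λ.Hom a c} {f : Λ.Hom a' b} (h : IsPrefix g f) : a = a' :=
  h.choose_spec.src

theorem of_homEq_left {g : Λ.Hom a c} {g' : Λ.Hom a' c'} {f : Λ.Hom a'' b}
    (hg : HomEq g g') (h : IsPrefix g' f) : IsPrefix g f := by
  obtain ⟨rfl, rfl, hg⟩ := hg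
  rwa [eq_of_heq hg]

theorem of_homEq_right {g : Λ.Hom a c} {f : Λ.Hom a' b} {f' : Λ.Hom a'' b'}
    (h : IsPrefix g f) (hf : HomEq f f') : IsPrefix g f' := by
  obtain rfl := hf.tgt
  obtain ⟨w, hw⟩ := h
  exact ⟨w, hw.trans hf⟩

theorem trans {g : Λ.Hom a c} {f : Λ.Hom a' b} {e : Λ.Hom a'' b'} (hg : IsPrefix g f)
    (hf : IsPrefix f e) : IsPrefix g e := by
  obtain ⟨w, hw⟩ := hg
  obtain ⟨w', hw'⟩ := hf
  exact ⟨Λ.comp w w', (HomEq.of_eq (Λ.assoc g w w')).symm.trans ((hw.comp (HomEq.refl w')).trans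
    (by obtain rfl := hw.src; exact hw'))⟩

theorem comp_left {g : Λ.Hom a c} {f : Λ.Hom a b} (h : IsPrefix g f) (μ : Λ.Hom a' a) :
    IsPrefix (Λ.comp μ g) (Λ.comp μ f) := by
  obtain ⟨w, hw⟩ := h
  exact ⟨w, (HomEq.of_eq (Λ.assoc μ g w)).trans ((HomEq.refl μ).comp hw)⟩

theorem homEq_of_d_eq {g : Λ.Hom a c} {g' : Λ.Hom a' c'} {f : Λ.Hom a'' b} (h : IsPrefix g f)
    (h' : IsPrefix g' f) (hd : Λ.d g = Λ.d g') : HomEq g g' := by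
  obtain ⟨w, hw⟩ := h
  obtain ⟨w', hw'⟩ := h'
  exact (factor_unique hd (hw.trans hw'.symm)).1

end IsPrefix

theorem exists_isPrefix {a b : Λ.Obj} (f : Λ.Hom a b) {m : Fin k → ℕ} (hm : m ≤ Λ.d f) :
    ∃ (c : Λ.Obj) (g : Λ.Hom a c), Λ.d g = m ∧ IsPrefix g f := by
  obtain ⟨⟨c, g, w⟩, ⟨hg, -, hgw⟩, -⟩ := Λ.factor f m (Λ.d f - m) (add_tsub_cancel_of_le hm).symm
  exact ⟨c, g, hg, w, HomEq.of_eq hgw⟩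

namespace InfPath

variable (x y : Λ.InfPath) {P Q : Fin k → ℕ}

/-- The initial segment `x(P) = x(0, P)`. -/
def init (P : Fin k → ℕ) : Λ.Hom (x.vert 0) (x.vert P) := x.seg 0 P zero_le

theorem d_init (P : Fin k → ℕ) : Λ.d (x.init P) = P := by
  rw [init, x.seg_deg, tsub_zero]

theorem init_zero : x.init 0 = Λ.id (x.vert 0) := x.seg_id 0

theorem isPrefix_init (h : P ≤ Q) : IsPrefix (x.init P) (x.init Q) :=
  ⟨x.seg P Q h, HomEq.of_eq (x.seg_comp 0 P Q zero_le h)⟩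

theorem init_add (P s : Fin k → ℕ) :
    HomEq (Λ.comp (x.init P) ((Λ.shift P x).init s)) (x.init (P + s)) :=
  HomEq.of_eq (x.seg_comp 0 P (P + s) zero_le le_self_add)

variable {x y}

theorem seg_congr {P' Q' : Fin k → ℕ} (hP : P = P') (hQ : Q = Q') (h : P ≤ Q) (h' : P' ≤ Q') :
    HomEq (x.seg P Q h) (x.seg P' Q' h') := by
  subst hP hQ
  rfl

theorem init_congr (h : P = Q) : HomEq (x.init P) (x.init Q) := seg_congr rfl h _ _

theorem homEq_init_of_eq (h : x = y) (P : Fin k → ℕ) : HomEq (x.init P) (y.init P) := by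
  subst h
  rfl

theorem homEq_init_of_le (hPQ : P ≤ Q) (h : HomEq (x.init Q) (y.init Q)) :
    HomEq (x.init P) (y.init P) :=
  (x.isPrefix_init hPQ).homEq_of_d_eq ((y.isPrefix_init hPQ).of_homEq_right h.symm)
    (by rw [d_init, d_init])

theorem ext_init (h : ∀ r, HomEq (x.init r) (y.init r)) : x = y := by
  revert h
  obtain ⟨xv, xs, -, xsc, xsd⟩ := x
  obtain ⟨yv, ys, -, ysc, ysd⟩ := y
  intro h
  obtain rfl : xv = yv := funext fun r => (h r).tgt
  obtain rfl : xs = ys := by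
    funext p q hpq
    have hd : Λ.d (xs 0 p zero_le) = Λ.d (ys 0 p zero_le) := by rw [xsd, ysd]
    refine (factor_unique hd ?_).2.eq
    rw [xsc, ysc]
    exact h q
  rfl

theorem ext_of_init_of_shift {N : Fin k → ℕ}
    (h₀ : HomEq (x.init N) (y.init N)) (h : Λ.shift N x = Λ.shift N y) : x = y :=
  ext_init fun r => homEq_init_of_le le_add_self <|
    (x.init_add N r).symm.trans ((h₀.comp (homEq_init_of_eq h r)).trans (y.init_add N r))

end InfPath

theorem shift_shift (P Q : Fin k → ℕ) (x : Λ.InfPath) :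
    Λ.shift Q (Λ.shift P x) = Λ.shift (P + Q) x :=
  InfPath.ext_init fun r => InfPath.seg_congr (add_assoc P Q 0).symm (add_assoc P Q r).symm _ _

namespace IsPrepend

variable {a b : Λ.Obj} {μ : Λ.Hom a b} {x y : Λ.InfPath}

theorem vert_zero (h : Λ.IsPrepend μ x y) : x.vert 0 = b := h.1

theorem shift_eq (h : Λ.IsPrepend μ x y) : Λ.shift (Λ.d μ) y = x := h.2.2.1

theorem init (h : Λ.IsPrepend μ x y) : HomEq (y.init (Λ.d μ)) μ :=
  ⟨h.2.1, (congrArg (fun z : Λ.InfPath => z.vert 0) h.shift_eq).trans h.1, h.2.2.2⟩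

theorem of_init (h₀ : HomEq (y.init (Λ.d μ)) μ) (h : Λ.shift (Λ.d μ) y = x) :
    Λ.IsPrepend μ x y :=
  ⟨(congrArg (fun z : Λ.InfPath => z.vert 0) h).symm.trans h₀.tgt, h₀.src, h, h₀.2.2⟩

theorem unique {y' : Λ.InfPath} (h : Λ.IsPrepend μ x y) (h' : Λ.IsPrepend μ x y') : y = y' :=
  InfPath.ext_of_init_of_shift (h.init.trans h'.init.symm) (h.shift_eq.trans h'.shift_eq.symm)

theorem congr {a' b' : Λ.Obj} {μ' : Λ.Hom a' b'} (hμ : HomEq μ μ') (h : Λ.IsPrepend μ x y) :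
    Λ.IsPrepend μ' x y := by
  obtain ⟨rfl, rfl, hμ⟩ := hμ
  rwa [← eq_of_heq hμ]

theorem of_comp {c : Λ.Obj} {f : Λ.Hom a c} {g : Λ.Hom c b}
    (h : Λ.IsPrepend (Λ.comp f g) x y) :
    Λ.IsPrepend f (Λ.shift (Λ.d f) y) y ∧ Λ.IsPrepend g x (Λ.shift (Λ.d f) y) := by
  have hsplit : HomEq (Λ.comp (y.init (Λ.d f)) ((Λ.shift (Λ.d f) y).init (Λ.d g)))
      (Λ.comp f g) :=
    (InfPath.init_add y _ _).trans ((InfPath.init_congr (Λ.d_comp f g).symm).trans h.init)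
  obtain ⟨hf, hg⟩ := factor_unique (InfPath.d_init _ _) hsplit
  refine ⟨of_init hf rfl, of_init hg ?_⟩
  rw [shift_shift, ← Λ.d_comp]
  exact h.shift_eq

theorem init_add {u : Λ.InfPath} {μ : Λ.Hom a (u.vert 0)} (h : Λ.IsPrepend μ u y)
    (s : Fin k → ℕ) : HomEq (y.init (Λ.d μ + s)) (Λ.comp μ (u.init s)) :=
  (InfPath.init_add y _ s).symm.trans (h.init.comp (InfPath.homEq_init_of_eq h.shift_eq s))

end IsPrepend

theorem isPrepend_init (x : Λ.InfPath) (P : Fin k → ℕ) :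
    Λ.IsPrepend (x.init P) (Λ.shift P x) x :=
  .of_init (InfPath.init_congr (x.d_init P)) (by rw [x.d_init])

theorem exists_infPath_of_chain {a : Λ.Obj} (G : (Fin k → ℕ) → Σ c : Λ.Obj, Λ.Hom a c)
    (hd : ∀ r, Λ.d (G r).2 = r) (hG : ∀ p q, p ≤ q → IsPrefix (G p).2 (G q).2) :
    ∃ y : Λ.InfPath, ∀ r, HomEq (y.init r) (G r).2 := by
  choose w hw using hG
  have hw_unique : ∀ {p q} (hpq : p ≤ q) (v : Λ.Hom (G p).1 (G q).1),
      Λ.comp (G p).2 v = (G q).2 → v = w p q hpq := fun hpq v hv =>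
    (factor_unique rfl ((HomEq.of_eq hv).trans (hw _ _ hpq).symm)).2.eq
  let y : Λ.InfPath :=
    { vert := fun r => (G r).1
      seg := w
      seg_id := fun p => (hw_unique le_rfl _ (Λ.comp_id _)).symm
      seg_comp := fun p q r hpq hqr => hw_unique _ _ <| by
        rw [← Λ.assoc, (hw p q hpq).eq, (hw q r hqr).eq]
      seg_deg := fun p q hpq => by
        have h := congrArg Λ.d (hw p q hpq).eq
        rw [Λ.d_comp, hd, hd] at h
        exact eq_tsub_of_add_eq ((add_comm _ _).trans h) }
  have hG₀ : HomEq (G 0).2 (Λ.id a) :=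
    (factor_unique (by rw [hd, Λ.d_id]) (HomEq.of_eq ((Λ.comp_id _).trans (Λ.id_comp _).symm))).1
  exact ⟨y, fun r => (factor_unique hG₀.d_eq ((hw 0 r zero_le).trans (HomEq.of_eq (Λ.id_comp _)).symm)).2⟩

theorem exists_infPath_of_directed {a : Λ.Obj} (X : (Fin k → ℕ) → Σ c : Λ.Obj, Λ.Hom a c)
    (hd : ∀ r, r ≤ Λ.d (X r).2) (hX : ∀ p q, p ≤ q → IsPrefix (X p).2 (X q).2) :
    ∃ y : Λ.InfPath, ∀ r, IsPrefix (y.init r) (X r).2 := by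
  choose c G hdG hGX using fun r => exists_isPrefix (X r).2 (hd r)
  obtain ⟨y, hy⟩ := exists_infPath_of_chain (fun r => ⟨c r, G r⟩) hdG fun p q hpq => by
    obtain ⟨c', g, hdg, hg⟩ := exists_isPrefix (G q) ((hdG q).symm ▸ hpq : p ≤ Λ.d (G q))
    have hgp : HomEq g (G p) :=
      (hg.trans (hGX q)).homEq_of_d_eq ((hGX p).trans (hX p q hpq)) (by rw [hdg, hdG])
    exact hg.of_homEq_left hgp.symm
  exact ⟨y, fun r => (hGX r).of_homEq_left (hy r)⟩

theorem exists_infPath (hns : Λ.NoSources) (v : Λ.Obj) : ∃ x : Λ.InfPath, x.vert 0 = v := by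
  choose next e he using fun u => hns u 1
  let E : ℕ → Σ c : Λ.Obj, Λ.Hom v c :=
    fun n => n.rec ⟨v, Λ.id v⟩ fun _ E => ⟨next E.1, Λ.comp E.2 (e E.1)⟩
  have hdE : ∀ n, Λ.d (E n).2 = fun _ => n := by
    intro n
    induction n with
    | zero => exact Λ.d_id v
    | succ n ih =>
      change Λ.d (Λ.comp (E n).2 _) = _
      rw [Λ.d_comp, ih, he]
      rfl
  have hE : ∀ m n, m ≤ n → IsPrefix (E m).2 (E n).2 := fun m n hmn => by
    induction n, hmn using Nat.le_induction with
    | base => exact .refl _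
    | succ n _ ih => exact ih.trans (.of_comp _ _)
  obtain ⟨y, hy⟩ := exists_infPath_of_directed (fun r => E (Finset.univ.sup r))
    (fun r i => by rw [hdE]; exact Finset.le_sup (Finset.mem_univ i))
    (fun p q hpq => hE _ _ (Finset.sup_mono_fun fun i _ => hpq i))
  exact ⟨y, (hy 0).src_eq⟩

theorem exists_isPrepend {a : Λ.Obj} (x : Λ.InfPath) (μ : Λ.Hom a (x.vert 0)) :
    ∃ y : Λ.InfPath, Λ.IsPrepend μ x y := by
  obtain ⟨y, hy⟩ := exists_infPath_of_directed (fun r => ⟨x.vert r, Λ.comp μ (x.init r)⟩)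
    (fun r => by rw [Λ.d_comp, x.d_init]; exact le_add_self)
    (fun p q hpq => (x.isPrefix_init hpq).comp_left μ)
  have hyμ : ∀ r, HomEq (y.init (Λ.d μ + r)) (Λ.comp μ (x.init r)) := fun r =>
    (hy _).homEq_of_d_eq ((x.isPrefix_init le_add_self).comp_left μ)
      (by rw [y.d_init, Λ.d_comp, x.d_init])
  refine ⟨y, .of_init ?_ (InfPath.ext_init fun r => ?_)⟩
  · have h₀ := hyμ 0
    rw [x.init_zero, Λ.comp_id] at h₀
    exact (InfPath.init_congr (add_zero _).symm).trans h₀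
  · have hsplit := (InfPath.init_add y (Λ.d μ) r).trans (hyμ r)
    exact (factor_unique (y.d_init _) hsplit).2

/-- `Z(μ, ν)` without requiring `s(μ) = s(ν)` in the types; it is empty unless the sources
agree. -/
def ZZ' {a v b w : Λ.Obj} (μ : Λ.Hom a v) (ν : Λ.Hom b w) : Set Λ.PathGroupoid :=
  {g | ∃ x : Λ.InfPath, Λ.IsPrepend μ x g.1.1 ∧ Λ.IsPrepend ν x g.1.2.2 ∧
    ∀ i, g.1.2.1 i = (Λ.d μ i : ℤ) - (Λ.d ν i : ℤ)}

section ZZ'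

variable {a v b w a' v' b' w' : Λ.Obj} {μ : Λ.Hom a v} {ν : Λ.Hom b w}

theorem isOpen_ZZ' (h : v = w) : IsOpen (ZZ' μ ν) := by
  subst h
  exact TopologicalSpace.isOpen_generateFrom_of_mem ⟨a, b, v, μ, ν, rfl⟩

theorem ZZ'_congr {μ' : Λ.Hom a' v'} {ν' : Λ.Hom b' w'} (hμ : HomEq μ μ') (hν : HomEq ν ν') :
    ZZ' μ ν = ZZ' μ' ν' := by
  obtain ⟨rfl, rfl, hμ⟩ := hμ
  obtain ⟨rfl, rfl, hν⟩ := hν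
  rw [eq_of_heq hμ, eq_of_heq hν]

theorem ZZ'_comp_subset {c c' : Λ.Obj} {α : Λ.Hom v c} {β : Λ.Hom w c'} (h : HomEq α β) :
    ZZ' (Λ.comp μ α) (Λ.comp ν β) ⊆ ZZ' μ ν := by
  rintro g ⟨t, hY, hZ, hn⟩
  obtain ⟨hμ, hα⟩ := hY.of_comp
  obtain ⟨hν, hβ⟩ := hZ.of_comp
  refine ⟨_, hμ, ?_, fun i => ?_⟩
  · rwa [(hα.congr h).unique hβ]
  · rw [hn i, Λ.d_comp, Λ.d_comp, h.d_eq, Pi.add_apply, Pi.add_apply]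
    push_cast
    ring

theorem ZZ'_init_add_subset {x y : Λ.InfPath} {P Q : Fin k → ℕ}
    (h : Λ.shift P x = Λ.shift Q y) (s : Fin k → ℕ) :
    ZZ' (x.init (P + s)) (y.init (Q + s)) ⊆ ZZ' (x.init P) (y.init Q) := by
  rw [← ZZ'_congr (x.init_add P s) (y.init_add Q s)]
  exact ZZ'_comp_subset (InfPath.homEq_init_of_eq h s)

theorem exists_mem_ZZ' {u Y Z : Λ.InfPath} (hY : Λ.IsPrepend μ u Y) (hZ : Λ.IsPrepend ν u Z) :
    ∃ g ∈ ZZ' μ ν, g.1.1 = Y ∧ g.1.2.2 = Z :=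
  ⟨⟨(Y, fun i => (Λ.d μ i : ℤ) - (Λ.d ν i : ℤ), Z), Λ.d μ, Λ.d ν, fun _ => rfl,
    hY.shift_eq.trans hZ.shift_eq.symm⟩, ⟨u, hY, hZ, fun _ => rfl⟩, rfl, rfl⟩

theorem ZZ'_nonempty (hns : Λ.NoSources) (h : v = w) : (ZZ' μ ν).Nonempty := by
  subst h
  obtain ⟨u, rfl⟩ := exists_infPath hns v
  obtain ⟨Y, hY⟩ := exists_isPrepend u μ
  obtain ⟨Z, hZ⟩ := exists_isPrepend u ν
  obtain ⟨g, hg, -⟩ := exists_mem_ZZ' hY hZ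
  exact ⟨g, hg⟩

end ZZ'

/-- `g = (x, P - Q, y)` with `σ^P x = σ^Q y`. -/
def IsShiftPair (g : Λ.PathGroupoid) (P Q : Fin k → ℕ) : Prop :=
  (∀ i, g.1.2.1 i = (P i : ℤ) - (Q i : ℤ)) ∧ Λ.shift P g.1.1 = Λ.shift Q g.1.2.2

theorem exists_isShiftPair (g : Λ.PathGroupoid) : ∃ P Q, IsShiftPair g P Q := g.2

namespace IsShiftPair

variable {g : Λ.PathGroupoid} {P Q : Fin k → ℕ}

theorem vert_eq (h : IsShiftPair g P Q) : g.1.1.vert P = g.1.2.2.vert Q :=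
  congrArg (fun z : Λ.InfPath => z.vert 0) h.2

theorem add (h : IsShiftPair g P Q) (s : Fin k → ℕ) : IsShiftPair g (P + s) (Q + s) := by
  refine ⟨fun i => ?_, by rw [← shift_shift, ← shift_shift, h.2]⟩
  rw [h.1 i, Pi.add_apply, Pi.add_apply]
  push_cast
  ring

theorem ZZ'_subset {P' Q' : Fin k → ℕ} (h : IsShiftPair g P Q) (h' : IsShiftPair g P' Q') :
    ZZ' (g.1.1.init (P + P')) (g.1.2.2.init (Q + P')) ⊆ ZZ' (g.1.1.init P') (g.1.2.2.init Q') := by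
  have hQ : Q + P' = Q' + P := funext fun i => by
    have := (h.1 i).symm.trans (h'.1 i)
    simp only [Pi.add_apply]
    omega
  rw [ZZ'_congr (InfPath.init_congr (add_comm P P')) (InfPath.init_congr hQ)]
  exact ZZ'_init_add_subset h'.2 P

theorem of_mem_ZZ' {a v b w : Λ.Obj} {μ : Λ.Hom a v} {ν : Λ.Hom b w} (hg : g ∈ ZZ' μ ν) :
    IsShiftPair g (Λ.d μ) (Λ.d ν) :=
  let ⟨_, hY, hZ, hn⟩ := hg
  ⟨hn, hY.shift_eq.trans hZ.shift_eq.symm⟩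

theorem mem_ZZ' (h : IsShiftPair g P Q) : g ∈ ZZ' (g.1.1.init P) (g.1.2.2.init Q) := by
  refine ⟨_, isPrepend_init _ P, ?_, fun i => ?_⟩
  · rw [h.2]
    exact isPrepend_init _ Q
  · rw [InfPath.d_init, InfPath.d_init]
    exact h.1 i

end IsShiftPair

theorem exists_isShiftPair_ZZ'_subset {U : Set Λ.PathGroupoid} (hU : IsOpen U)
    {g : Λ.PathGroupoid} (hg : g ∈ U) :
    ∃ P Q, IsShiftPair g P Q ∧ ZZ' (g.1.1.init P) (g.1.2.2.init Q) ⊆ U := by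
  induction hU with
  | basic S hS =>
    obtain ⟨a, b, v, μ, ν, rfl⟩ := hS
    refine ⟨_, _, .of_mem_ZZ' hg, ?_⟩
    obtain ⟨t, hY, hZ, -⟩ := hg
    rw [ZZ'_congr hY.init hZ.init]
    exact subset_rfl
  | univ =>
    obtain ⟨P, Q, h⟩ := exists_isShiftPair g
    exact ⟨P, Q, h, Set.subset_univ _⟩
  | inter U V _ _ ihU ihV =>
    obtain ⟨P, Q, h, hU⟩ := ihU hg.1
    obtain ⟨P', Q', h', hV⟩ := ihV hg.2
    exact ⟨P + P', Q + P', h.add P',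
      Set.subset_inter ((ZZ'_init_add_subset h.2 P').trans hU) ((h.ZZ'_subset h').trans hV)⟩
  | sUnion S _ ih =>
    obtain ⟨T, hT, hgT⟩ := hg
    obtain ⟨P, Q, h, hsub⟩ := ih T hT hgT
    exact ⟨P, Q, h, hsub.trans (Set.subset_sUnion_of_mem hT)⟩

namespace Cycline

variable {a v b w : Λ.Obj}

theorem refl (μ : Λ.Hom a v) : Λ.Cycline μ μ := ⟨rfl, fun _ _ _ h h' => h.unique h'⟩

theorem congr {a' v' b' w' : Λ.Obj} {μ : Λ.Hom a v} {ν : Λ.Hom b w} {μ' : Λ.Hom a' v'}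
    {ν' : Λ.Hom b' w'} (h : Λ.Cycline μ ν) (hμ : HomEq μ μ') (hν : HomEq ν ν') :
    Λ.Cycline μ' ν' := by
  obtain ⟨rfl, rfl, hμ⟩ := hμ
  obtain ⟨rfl, rfl, hν⟩ := hν
  rwa [← eq_of_heq hμ, ← eq_of_heq hν]

end Cycline

theorem cycline_iff {a v b w : Λ.Obj} {μ : Λ.Hom a v} {ν : Λ.Hom b w} :
    Λ.Cycline μ ν ↔ v = w ∧ ZZ' μ ν ⊆ Λ.isoSet := by
  refine ⟨fun h => ⟨h.1, fun g ⟨u, hY, hZ, _⟩ => h.2 u _ _ hY hZ⟩, fun ⟨hvw, hsub⟩ => ⟨hvw, ?_⟩⟩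
  intro u Y Z hY hZ
  obtain ⟨g, hg, rfl, rfl⟩ := exists_mem_ZZ' hY hZ
  exact hsub hg

def HasCyclineExtension {a v b w : Λ.Obj} (μ : Λ.Hom a v) (ν : Λ.Hom b w) : Prop :=
  ∃ (c : Λ.Obj) (α : Λ.Hom v c) (β : Λ.Hom w c), HEq α β ∧
    Λ.Cycline (Λ.comp μ α) (Λ.comp ν β)

theorem hasCyclineExtension_of_isPrepend {a v b w : Λ.Obj} {μ : Λ.Hom a v} {ν : Λ.Hom b w}
    {u Y Z : Λ.InfPath} (hY : Λ.IsPrepend μ u Y) (hZ : Λ.IsPrepend ν u Z) {s : Fin k → ℕ}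
    (h : Λ.Cycline (Y.init (Λ.d μ + s)) (Z.init (Λ.d ν + s))) : HasCyclineExtension μ ν := by
  obtain rfl := hY.vert_zero
  obtain rfl := hZ.vert_zero
  exact ⟨_, u.init s, u.init s, HEq.rfl, h.congr (hY.init_add s) (hZ.init_add s)⟩

def cyclineSet (Λ : KGraph k) : Set Λ.PathGroupoid :=
  {g | ∃ (a v b w : Λ.Obj) (μ : Λ.Hom a v) (ν : Λ.Hom b w), Λ.Cycline μ ν ∧ g ∈ ZZ' μ ν}

theorem cyclineSet_subset_isoSet : Λ.cyclineSet ⊆ Λ.isoSet :=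
  fun _ ⟨_, _, _, _, _, _, hc, hg⟩ => (cycline_iff.mp hc).2 hg

theorem interior_isoSet : interior Λ.isoSet = Λ.cyclineSet := by
  refine subset_antisymm (fun g hg => ?_) fun g ⟨_, _, _, _, _, _, hc, hg⟩ =>
    mem_interior.mpr ⟨_, (cycline_iff.mp hc).2, isOpen_ZZ' hc.1, hg⟩
  obtain ⟨P, Q, h, hsub⟩ := exists_isShiftPair_ZZ'_subset isOpen_interior hg
  exact ⟨_, _, _, _, _, _, cycline_iff.mpr ⟨h.vert_eq, hsub.trans interior_subset⟩, h.mem_ZZ'⟩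

theorem mem_cyclineSet_iff {g : Λ.PathGroupoid} {P Q : Fin k → ℕ} (h : IsShiftPair g P Q) :
    g ∈ Λ.cyclineSet ↔ ∃ m, Λ.Cycline (g.1.1.init (P + m)) (g.1.2.2.init (Q + m)) := by
  refine ⟨fun ⟨_, _, _, _, μ, ν, hc, hg⟩ => ?_, fun ⟨m, hc⟩ =>
    ⟨_, _, _, _, _, _, hc, (h.add m).mem_ZZ'⟩⟩
  have hμν := IsShiftPair.of_mem_ZZ' hg
  obtain ⟨t, hY, hZ, -⟩ := hg
  refine ⟨Λ.d μ, cycline_iff.mpr ⟨(h.add _).vert_eq, (h.ZZ'_subset hμν).trans ?_⟩⟩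
  rw [ZZ'_congr hY.init hZ.init]
  exact (cycline_iff.mp hc).2

theorem isClosed_isoSet : IsClosed Λ.isoSet := by
  refine isClosed_of_closure_subset fun g hg => ?_
  obtain ⟨P, Q, h⟩ := exists_isShiftPair g
  refine InfPath.ext_init fun r => ?_
  obtain ⟨g', ⟨u, hY, hZ, -⟩, hg'⟩ :=
    mem_closure_iff.mp hg _ (isOpen_ZZ' (h.add r).vert_eq) (h.add r).mem_ZZ'
  have hY' := (InfPath.init_congr (InfPath.d_init _ _).symm).trans hY.init
  have hZ' := (InfPath.init_congr (InfPath.d_init _ _).symm).trans hZ.init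
  refine (InfPath.homEq_init_of_le le_add_self hY'.symm).trans ?_
  rw [show g'.1.1 = g'.1.2.2 from hg']
  exact InfPath.homEq_init_of_le le_add_self hZ'

theorem hasCyclineExtension_of_mem_closure {g : Λ.PathGroupoid} (hg : g ∈ closure Λ.cyclineSet)
    {P Q : Fin k → ℕ} (h : IsShiftPair g P Q) (m : Fin k → ℕ) :
    HasCyclineExtension (g.1.1.init (P + m)) (g.1.2.2.init (Q + m)) := by
  obtain ⟨g', hg', hc⟩ :=
    mem_closure_iff.mp hg _ (isOpen_ZZ' (h.add m).vert_eq) (h.add m).mem_ZZ'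
  obtain ⟨m', hm'⟩ := (mem_cyclineSet_iff (IsShiftPair.of_mem_ZZ' hg')).mp hc
  obtain ⟨u, hY, hZ, -⟩ := hg'
  exact hasCyclineExtension_of_isPrepend hY hZ hm'

theorem mem_closure_of_hasCyclineExtension (hns : Λ.NoSources) {g : Λ.PathGroupoid}
    {P Q : Fin k → ℕ} (h : IsShiftPair g P Q)
    (hext : ∀ m, HasCyclineExtension (g.1.1.init (P + m)) (g.1.2.2.init (Q + m))) :
    g ∈ closure Λ.cyclineSet := by
  refine mem_closure_iff.mpr fun U hU hgU => ?_
  obtain ⟨P', Q', h', hsub⟩ := exists_isShiftPair_ZZ'_subset hU hgU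
  obtain ⟨c, α, β, hαβ, hc⟩ := hext P'
  obtain ⟨g', hg'⟩ := ZZ'_nonempty hns hc.1
  exact ⟨g', (h.ZZ'_subset h').trans hsub (ZZ'_comp_subset ⟨(h.add P').vert_eq, rfl, hαβ⟩ hg'),
    _, _, _, _, _, _, hc, hg'⟩

def isoPoint (x : Λ.InfPath) (p q : Fin k → ℕ) (h : Λ.shift p x = Λ.shift q x) :
    Λ.PathGroupoid :=
  ⟨(x, fun i => (p i : ℤ) - (q i : ℤ), x), p, q, fun _ => rfl, h⟩

theorem isShiftPair_isoPoint {x : Λ.InfPath} {p q : Fin k → ℕ} (h : Λ.shift p x = Λ.shift q x) :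
    IsShiftPair (isoPoint x p q h) p q :=
  ⟨fun _ => rfl, h⟩

theorem mem_lambdaPQ_iff (hns : Λ.NoSources) {x : Λ.InfPath} {p q : Fin k → ℕ}
    (h : Λ.shift p x = Λ.shift q x) :
    x ∈ Λ.LambdaPQ p q ↔ isoPoint x p q h ∈ closure Λ.cyclineSet \ Λ.cyclineSet := by
  have hpq := isShiftPair_isoPoint h
  rw [Set.mem_sdiff, mem_cyclineSet_iff hpq, not_exists]
  exact ⟨fun ⟨_, hx⟩ => ⟨mem_closure_of_hasCyclineExtension hns hpq fun m => (hx m).2,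
      fun m => (hx m).1⟩,
    fun ⟨hcl, hnot⟩ => ⟨h, fun m => ⟨hnot m, hasCyclineExtension_of_mem_closure hcl hpq m⟩⟩⟩

end KGraph

theorem stmt12_general {k : ℕ} (Λ : KGraph k) (hns : Λ.NoSources) :
    IsClosed (interior Λ.isoSet) ↔
      ∀ p q : Fin k → ℕ, p ≠ q → Λ.LambdaPQ p q = ∅ := by
  rw [KGraph.interior_isoSet]
  constructor
  · refine fun hclosed p q _ => Set.eq_empty_iff_forall_notMem.mpr fun x hx => ?_
    obtain ⟨hcl, hnot⟩ := (KGraph.mem_lambdaPQ_iff hns hx.1).mp hx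
    exact hnot (hclosed.closure_subset hcl)
  · refine fun hempty => isClosed_of_closure_subset fun g hg => ?_
    have hdiag : g.1.1 = g.1.2.2 :=
      KGraph.isClosed_isoSet.closure_subset (closure_mono KGraph.cyclineSet_subset_isoSet hg)
    obtain ⟨⟨x, n, y⟩, p, q, hn, hs⟩ := g
    obtain rfl : x = y := hdiag
    obtain rfl : n = fun i => (p i : ℤ) - (q i : ℤ) := funext hn
    change KGraph.isoPoint x p q hs ∈ _ at hg ⊢
    by_contra hnot
    have hpq : p ≠ q := by
      rintro rfl
      exact hnot ((KGraph.mem_cyclineSet_iff (KGraph.isShiftPair_isoPoint hs)).mpr ⟨0, .refl _⟩)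
    exact (Set.eq_empty_iff_forall_notMem.mp (hempty p q hpq)) x
      ((KGraph.mem_lambdaPQ_iff hns hs).mpr ⟨hg, hnot⟩)

/-- Theorem 4.5: `Iso(G_Λ)°` is closed iff `Λ^∞_{p,q} = ∅` for all `p ≠ q` in `ℕ^k`. -/
theorem stmt12 {k : ℕ} (hk : 1 ≤ k) (Λ : KGraph k)
    [Countable Λ.Obj] [Countable (Σ a b : Λ.Obj, Λ.Hom a b)]
    (hrow : Λ.RowFinite) (hns : Λ.NoSources) :
    IsClosed (interior Λ.isoSet) ↔
      ∀ p q : Fin k → ℕ, p ≠ q → Λ.LambdaPQ p q = ∅ :=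
  stmt12_general Λ hns
end
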